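/- arXiv:2111.00027 — 4 statements merged into one kernel-verified Lean document; each statement's English description precedes it below -/
import Mathlib

section
/- The (1-α)-quantile of a central chi-squared distribution with m degrees of freedom is at most m + 2√(m log(1/α)) + 2 log(1/α), for α ∈ (0,1). -/
/-! Chernoff's bound. For `0 ≤ s < 1/2` the moment generating function of `Z²`, `Z` standard
Gaussian, is `(1 - 2s)^{-1/2} ≤ exp (s + s² / (1 - 2s))`, so by independence
`P(χ²_m ≥ q) ≤ exp (-s q + m (s + s² / (1 - 2s)))`. For `q = m + 2√(mt) + 2t` the choice
`s = √t / (√m + 2√t)` makes the exponent exactly `-t`; with `t = log (1/α)` the tail at `q` is at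
most `α`, so the quantile is at most `q`. -/

open MeasureTheory ProbabilityTheory Real

lemma mgf_sq_gaussianReal {s : ℝ} (hs : s < 1 / 2) :
    mgf (fun x => x ^ 2) (gaussianReal 0 1) s = (√(1 - 2 * s))⁻¹ := by
  have hpdf (x : ℝ) : gaussianPDFReal 0 1 x • exp (s * x ^ 2)
      = (√(2 * π))⁻¹ * exp (-(1 / 2 - s) * x ^ 2) := by
    simp only [gaussianPDFReal, NNReal.coe_one, mul_one, sub_zero, smul_eq_mul]
    rw [mul_assoc, ← exp_add]
    ring_nf
  rw [mgf, integral_gaussianReal_eq_integral_smul one_ne_zero]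
  simp_rw [hpdf]
  rw [integral_const_mul, integral_gaussian, ← sqrt_inv, ← sqrt_mul (by positivity), ← sqrt_inv]
  congr 1
  have : (1 : ℝ) - 2 * s ≠ 0 := by linarith
  field_simp [pi_ne_zero]

lemma mgf_sq_of_map_eq_gaussianReal {Ω : Type*} [MeasurableSpace Ω] {P : Measure Ω}
    {X : Ω → ℝ} (hX : P.map X = gaussianReal 0 1) {s : ℝ} (hs : s < 1 / 2) :
    mgf (fun ω => X ω ^ 2) P s = (√(1 - 2 * s))⁻¹ := by
  have hXm : AEMeasurable X P := .of_map_ne_zero (by simp [hX, NeZero.ne])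
  rw [← mgf_sq_gaussianReal hs, ← hX, mgf_map hXm (by fun_prop)]
  rfl

lemma inv_sqrt_one_sub_two_mul_le_exp {s : ℝ} (hs0 : 0 ≤ s) (hs : s < 1 / 2) :
    (√(1 - 2 * s))⁻¹ ≤ exp (s + s ^ 2 / (1 - 2 * s)) := by
  have hpos : 0 < 1 - 2 * s := by linarith
  set x := 2 * s + 2 * s ^ 2 / (1 - 2 * s)
  have hquad : (1 - 2 * s)⁻¹ ≤ 1 + x + x ^ 2 / 2 := by
    have hx : (1 + x + x ^ 2 / 2) * (1 - 2 * s) = 1 + 2 * s ^ 4 / (1 - 2 * s) := by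
      simp only [x]
      field_simp
      ring
    rw [inv_le_iff_one_le_mul₀ hpos, hx]
    have : 0 ≤ 2 * s ^ 4 / (1 - 2 * s) := by positivity
    linarith
  have hx2 : ((2 : ℕ) : ℝ) * (s + s ^ 2 / (1 - 2 * s)) = x := by
    simp only [x]
    push_cast
    ring
  rw [← sqrt_inv, sqrt_le_iff, ← exp_nat_mul, hx2]
  exact ⟨(exp_pos _).le, hquad.trans (quadratic_le_exp_of_nonneg (by positivity))⟩

lemma chernoff_exponent_eq {a b s : ℝ} (ha : 0 < a) (hb : 0 ≤ b) (hs : s = b / (a + 2 * b)) :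
    -s * (a ^ 2 + 2 * (a * b) + 2 * b ^ 2) + a ^ 2 * (s + s ^ 2 / (1 - 2 * s)) = -b ^ 2 := by
  have hab : 0 < a + 2 * b := by linarith
  have h1s : 1 - 2 * s = a / (a + 2 * b) := by
    rw [hs]
    field_simp
    ring
  rw [h1s, hs]
  field_simp
  ring

section ChiSquared

variable {Ω ι : Type*} [MeasurableSpace Ω] {P : Measure Ω} [Fintype ι] {Y : ι → Ω → ℝ}

lemma mgf_sum_sq_of_iIndepFun (hindep : iIndepFun Y P)
    (hY : ∀ i, P.map (Y i) = gaussianReal 0 1) {s : ℝ} (hs : s < 1 / 2) :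
    mgf (∑ i, fun ω => Y i ω ^ 2) P s = (√(1 - 2 * s))⁻¹ ^ Fintype.card ι := by
  have hYm (i : ι) : AEMeasurable (Y i) P := .of_map_ne_zero (by simp [hY i, NeZero.ne])
  have hsq : iIndepFun (fun i ω => Y i ω ^ 2) P :=
    hindep.comp (fun _ x => x ^ 2) fun _ => by fun_prop
  rw [hsq.mgf_sum₀ (fun i => (hYm i).pow_const 2)]
  simp only [mgf_sq_of_map_eq_gaussianReal (hY _) hs, Finset.prod_const, Finset.card_univ]

lemma measureReal_sum_sq_ge_le_exp_mul [IsProbabilityMeasure P] (hindep : iIndepFun Y P)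
    (hY : ∀ i, P.map (Y i) = gaussianReal 0 1) {s : ℝ} (hs0 : 0 ≤ s) (hs : s < 1 / 2) (q : ℝ) :
    P.real {ω | q ≤ ∑ i, Y i ω ^ 2} ≤ exp (-s * q) * (√(1 - 2 * s))⁻¹ ^ Fintype.card ι := by
  have hmgf := mgf_sum_sq_of_iIndepFun hindep hY hs
  have hint : Integrable (fun ω => exp (s * (∑ i, fun ω => Y i ω ^ 2) ω)) P :=
    .of_integral_ne_zero (by
      rw [← mgf, hmgf]
      exact pow_ne_zero _ (inv_ne_zero (sqrt_ne_zero'.2 (by linarith))))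
  simpa only [Finset.sum_apply, hmgf] using measure_ge_le_exp_mul_mgf q hs0 hint

theorem measureReal_chiSq_tail_le [IsProbabilityMeasure P] (hindep : iIndepFun Y P)
    (hY : ∀ i, P.map (Y i) = gaussianReal 0 1) {t : ℝ} (ht : 0 ≤ t) :
    P.real {ω | Fintype.card ι + 2 * √(Fintype.card ι * t) + 2 * t ≤ ∑ i, Y i ω ^ 2}
      ≤ exp (-t) := by
  set m := Fintype.card ι
  rcases ht.eq_or_lt with rfl | ht
  · simp
  -- For `m = 0` the optimal Chernoff parameter would be `s = 1/2`, out of range; the event is empty.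
  rcases Nat.eq_zero_or_pos m with hm | hm
  · have : IsEmpty ι := Fintype.card_eq_zero_iff.1 hm
    have hempty : {ω | (m : ℝ) + 2 * √(m * t) + 2 * t ≤ ∑ i, Y i ω ^ 2} = ∅ := by
      ext ω
      simp [hm, ht]
    rw [hempty, measureReal_empty]
    positivity
  set a := √(m : ℝ)
  set b := √t
  have ha : 0 < a := sqrt_pos.2 (by exact_mod_cast hm)
  have hb : 0 ≤ b := sqrt_nonneg t
  have hab : 0 < a + 2 * b := by linarith
  set s := b / (a + 2 * b) with hs
  have hs0 : 0 ≤ s := by positivity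
  have hs1 : s < 1 / 2 := by
    rw [hs, div_lt_iff₀ hab]
    linarith
  have hq : (m : ℝ) + 2 * √(m * t) + 2 * t = a ^ 2 + 2 * (a * b) + 2 * b ^ 2 := by
    rw [sq_sqrt ht.le, sq_sqrt (Nat.cast_nonneg m), sqrt_mul (Nat.cast_nonneg m)]
  have hm_sq : (m : ℝ) = a ^ 2 := (sq_sqrt (Nat.cast_nonneg m)).symm
  rw [hq]
  calc _ ≤ exp (-s * (a ^ 2 + 2 * (a * b) + 2 * b ^ 2)) * (√(1 - 2 * s))⁻¹ ^ m :=
        measureReal_sum_sq_ge_le_exp_mul hindep hY hs0 hs1 _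
    _ ≤ exp (-s * (a ^ 2 + 2 * (a * b) + 2 * b ^ 2)) * exp (s + s ^ 2 / (1 - 2 * s)) ^ m := by
        gcongr
        exact inv_sqrt_one_sub_two_mul_le_exp hs0 hs1
    _ = exp (-t) := by
        rw [← exp_nat_mul, ← exp_add, hm_sq, chernoff_exponent_eq ha hb hs, sq_sqrt ht.le]

end ChiSquared

lemma csInf_setOf_tail_le_le {Ω : Type*} [MeasurableSpace Ω] {P : Measure Ω}
    [IsProbabilityMeasure P] {X : Ω → ℝ} (hX : ∀ ω, 0 ≤ X ω) {α q : ℝ} (hα : α < 1)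
    (hq : (P {ω | q ≤ X ω}).toReal ≤ α) :
    sInf {q | (P {ω | q ≤ X ω}).toReal ≤ α} ≤ q := by
  refine csInf_le ⟨0, fun q' hq' => ?_⟩ hq
  by_contra! hneg
  have huniv : {ω | q' ≤ X ω} = Set.univ :=
    Set.eq_univ_of_forall fun ω => hneg.le.trans (hX ω)
  have : (P {ω | q' ≤ X ω}).toReal ≤ α := hq'
  rw [huniv, measure_univ, ENNReal.toReal_one] at this
  linarith

/-- The `(1-α)`-quantile of a central chi-squared distribution with `m` degrees
of freedom (the smallest `q` with `P(X ≥ q) ≤ α`, for `X` a sum of squares of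
`m` i.i.d. standard Gaussians) is at most `m + 2√(m log(1/α)) + 2 log(1/α)`. -/
theorem chisq_quantile_upper_bound
    {Ω : Type*} [MeasurableSpace Ω] (P : Measure Ω) [IsProbabilityMeasure P]
    (m : ℕ) (Y : Fin m → Ω → ℝ)
    (hindep : iIndepFun Y P)
    (hY : ∀ i, Measure.map (Y i) P = gaussianReal 0 1)
    (α : ℝ) (hα : α ∈ Set.Ioo (0:ℝ) 1) :
    sInf {q : ℝ | (P {ω | q ≤ ∑ i, Y i ω ^ 2}).toReal ≤ α}
      ≤ m + 2 * Real.sqrt (m * Real.log (1 / α)) + 2 * Real.log (1 / α) := by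
  obtain ⟨hα0, hα1⟩ := hα
  have ht : 0 ≤ log (1 / α) := log_nonneg (by rw [le_div_iff₀ hα0]; linarith)
  have hexp : exp (-log (1 / α)) = α := by rw [one_div, log_inv, neg_neg, exp_log hα0]
  refine csInf_setOf_tail_le_le (fun ω => by positivity) hα1 ?_
  have htail := measureReal_chiSq_tail_le hindep hY ht
  rwa [Fintype.card_fin, hexp] at htail
end

section
/- Let A ≥ 1, L ≥ 1 integers, α, β ∈ (0,1), and suppose A ≥ √(3 log(1/β)) + (3 log(1/β) + 2√(log(1/α)) + 2 log(1/α))^{1/2}. Then A²√L - 2√((L-1+2A²√L) log(1/β)) ≥ 2√((L-1) log(1/α)) + 2 log(1/α). -/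
/-!
Write `a = log (1/α)`, `b = log (1/β)`, both nonnegative. Squaring `A - √(3b) ≥ √(3b + 2√a + 2a)`
gives `A² - 2A√(3b) ≥ 2√a + 2a`. Since `L - 1 + 2A²√L ≤ 3A²L`, the `β`-term on the left is at most
`2A√(3b)√L`, so the left side is at least `√L (A² - 2A√(3b)) ≥ 2√L√a + 2√L a`, which dominates
the right side because `L - 1 ≤ L` and `1 ≤ √L`.
-/

open Real

lemma le_sq_sub_two_mul_sqrt_of_sqrt_add_sqrt_le {t c A : ℝ} (ht : 0 ≤ t)
    (h : √t + √(t + c) ≤ A) : c ≤ A ^ 2 - 2 * A * √t := by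
  have hsq : t + c ≤ (A - √t) ^ 2 :=
    (sqrt_le_left (by linarith [sqrt_nonneg (t + c)])).mp (by linarith)
  nlinarith [sq_sqrt ht]

lemma sqrt_sub_one_add_mul_le {x A b : ℝ} (hx : 1 ≤ x) (hA : 1 ≤ A) (hb : 0 ≤ b) :
    √((x - 1 + 2 * A ^ 2 * √x) * b) ≤ √x * A * √(3 * b) := by
  have hsx : √x ≤ x := sqrt_le_left (by linarith) |>.mpr (by nlinarith)
  have hA2 : 1 ≤ A ^ 2 := one_le_pow₀ hA
  refine (sqrt_le_left (by positivity)).mpr ?_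
  rw [mul_pow, mul_pow, sq_sqrt (by linarith), sq_sqrt (by linarith)]
  have hcoef : x - 1 + 2 * A ^ 2 * √x ≤ 3 * A ^ 2 * x := by nlinarith
  nlinarith [mul_le_mul_of_nonneg_right hcoef hb]

lemma sqrt_sub_one_mul_le (x : ℝ) {a : ℝ} (ha : 0 ≤ a) : √((x - 1) * a) ≤ √x * √a := by
  rw [← sqrt_mul' x ha]
  exact sqrt_le_sqrt (by nlinarith)

/-- The algebraic inequality used in the asymptotic power analysis. -/
theorem power_threshold_ineq (L : ℕ) (A α β : ℝ) (hL : 1 ≤ L) (hA : 1 ≤ A)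
    (hα : α ∈ Set.Ioo (0:ℝ) 1) (hβ : β ∈ Set.Ioo (0:ℝ) 1)
    (hAbig : A ≥ Real.sqrt (3 * Real.log (1 / β)) +
      Real.sqrt (3 * Real.log (1 / β) + 2 * Real.sqrt (Real.log (1 / α))
        + 2 * Real.log (1 / α))) :
    A ^ 2 * Real.sqrt L -
      2 * Real.sqrt (((L : ℝ) - 1 + 2 * A ^ 2 * Real.sqrt L) * Real.log (1 / β))
    ≥ 2 * Real.sqrt (((L : ℝ) - 1) * Real.log (1 / α)) + 2 * Real.log (1 / α) := by
  set a := log (1 / α)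
  set b := log (1 / β)
  have ha : 0 ≤ a := log_nonneg (one_le_one_div hα.1 hα.2.le)
  have hb : 0 ≤ b := log_nonneg (one_le_one_div hβ.1 hβ.2.le)
  have hL' : (1 : ℝ) ≤ L := by exact_mod_cast hL
  have hsL : 1 ≤ √(L : ℝ) := one_le_sqrt.mpr hL'
  have hkey : 2 * √a + 2 * a ≤ A ^ 2 - 2 * A * √(3 * b) :=
    le_sq_sub_two_mul_sqrt_of_sqrt_add_sqrt_le (by positivity)
      (by rw [← add_assoc]; exact hAbig)
  calc 2 * √((L - 1) * a) + 2 * a ≤ 2 * (√L * √a) + 2 * (√L * a) := by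
        gcongr
        · exact sqrt_sub_one_mul_le _ ha
        · exact le_mul_of_one_le_left ha hsL
    _ = √L * (2 * √a + 2 * a) := by ring
    _ ≤ √L * (A ^ 2 - 2 * A * √(3 * b)) := by gcongr
    _ = A ^ 2 * √L - 2 * (√L * A * √(3 * b)) := by ring
    _ ≤ A ^ 2 * √L - 2 * √((L - 1 + 2 * A ^ 2 * √L) * b) := by
        gcongr
        exact sqrt_sub_one_add_mul_le hL' hA hb
end

section
/- Let g: ℝ → ℝ be even with finite fourth moments of g(X) for X ~ N(0,1), and let X, X̃, ε be independent N(0,1). Then Var((g(X) - X + ε)²) - Var((g(X) - X̃ + ε)²) = 6 E[X² g(X)²] - 6 E[g(X)²]. -/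
/-!
Write `U = g(X) - X` and `V = g(X) - X̃`; both are independent of `ε`. For any `W ∈ L⁴`
independent of a standard Gaussian `ε`, expanding `(W + ε)⁴` binomially gives
`Var((W + ε)²) = E W⁴ + 4 E W² + 2 - (E W²)²`, so only the second and fourth moments of `U`
and `V` matter. The odd terms of their binomial expansions vanish: for `V` because `X̃` is
independent of `X` and has vanishing odd moments, for `U` because `x ↦ xʲ g(x)ᵏ` is odd for odd
`j` and the Gaussian is symmetric. Hence `E U² = E V² = E g(X)² + 1`, while the fourth moments
differ only in `6 E[X² g(X)²]` against `6 E[g(X)²] E[X̃²]`. The Gaussian moments `E X² = 1` and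
`E X⁴ = 3` come from Stein's identity `E X^(n+2) = (n+1) E Xⁿ`.
-/

open MeasureTheory ProbabilityTheory Real Finset
open scoped NNReal ENNReal

lemma MeasureTheory.MemLp.integrable_pow_of_le {α : Type*} {m : MeasurableSpace α}
    {μ : Measure α} [IsFiniteMeasure μ] {f : α → ℝ} {n k : ℕ} (hf : MemLp f n μ) (hk : k ≤ n) :
    Integrable (fun x => f x ^ k) μ :=
  (integrable_norm_pow_of_le hf.1 hk hf.integrable_norm_pow').mono' (hf.1.pow k)
    (ae_of_all _ fun x => by simp [norm_pow])

lemma MeasureTheory.memLp_of_integrable_abs_pow {α : Type*} {m : MeasurableSpace α}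
    {μ : Measure α} {f : α → ℝ} {n : ℕ} (hn : n ≠ 0) (hf : AEStronglyMeasurable f μ)
    (hint : Integrable (fun x => |f x| ^ n) μ) : MemLp f n μ :=
  (integrable_norm_rpow_iff hf (by simpa) (by simp)).1 (by simpa using hint)

lemma integral_eq_zero_of_odd {G E : Type*} [MeasurableSpace G] [AddGroup G] [MeasurableNeg G]
    [NormedAddCommGroup E] [NormedSpace ℝ E] (μ : Measure G) [μ.IsNegInvariant] {f : G → E}
    (hf : f.Odd) : ∫ x, f x ∂μ = 0 := by
  have h := integral_neg_eq_self f μ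
  simp only [hf _, integral_neg] at h
  have h2 : (2 : ℝ) • ∫ x, f x ∂μ = 0 := by
    rw [two_smul]
    nth_rewrite 1 [← h]
    exact neg_add_cancel _
  simpa using h2

section Binomial

variable {α : Type*} {m : MeasurableSpace α} {μ : Measure α}

lemma integral_add_pow {f h : α → ℝ} {n : ℕ}
    (hint : ∀ k ≤ n, Integrable (fun x => f x ^ k * h x ^ (n - k)) μ) :
    ∫ x, (f x + h x) ^ n ∂μ
      = ∑ k ∈ range (n + 1), n.choose k * ∫ x, f x ^ k * h x ^ (n - k) ∂μ := by
  simp_rw [add_pow, ← integral_const_mul]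
  refine integral_finsetSum _ (fun k hk => ?_) |>.trans (sum_congr rfl fun k _ => ?_)
  · exact (hint k (mem_range_succ_iff.mp hk)).mul_const _
  · exact integral_congr_ae (ae_of_all _ fun x => by ring)

lemma ProbabilityTheory.IndepFun.integral_add_pow [IsFiniteMeasure μ] {W Z : α → ℝ} {n : ℕ}
    (hWZ : IndepFun W Z μ) (hW : MemLp W n μ) (hZ : MemLp Z n μ) :
    ∫ x, (W x + Z x) ^ n ∂μ
      = ∑ k ∈ range (n + 1), n.choose k * ((∫ x, W x ^ k ∂μ) * ∫ x, Z x ^ (n - k) ∂μ) := by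
  have hpow : ∀ k, IndepFun (fun x => W x ^ k) (fun x => Z x ^ (n - k)) μ := fun k =>
    hWZ.comp (measurable_id.pow_const k) (measurable_id.pow_const (n - k))
  rw [_root_.integral_add_pow fun k hk =>
    (hpow k).integrable_mul (hW.integrable_pow_of_le hk) (hZ.integrable_pow_of_le (by omega))]
  refine sum_congr rfl fun k _ => ?_
  rw [(hpow k).integral_fun_mul_eq_mul_integral (hW.1.pow k) (hZ.1.pow (n - k))]

end Binomial

lemma integral_sub_id_pow {μ : Measure ℝ} {g : ℝ → ℝ} {n : ℕ} (hg : Measurable g)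
    (hmom : ∀ k ≤ n, Integrable (fun x => |x| ^ (n - k) * |g x| ^ k) μ) :
    ∫ x, (g x - x) ^ n ∂μ
      = ∑ k ∈ range (n + 1), n.choose k * ∫ x, g x ^ k * (-x) ^ (n - k) ∂μ := by
  simp_rw [sub_eq_add_neg]
  refine integral_add_pow fun k hk => (hmom k hk).mono' (by fun_prop) (ae_of_all _ fun x => ?_)
  simp [mul_comm]

section Law

variable {Ω : Type*} {mΩ : MeasurableSpace Ω} {P : Measure Ω}

lemma ProbabilityTheory.HasLaw.of_map_eq {𝓧 : Type*} {m𝓧 : MeasurableSpace 𝓧} {μ : Measure 𝓧}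
    [NeZero μ] {X : Ω → 𝓧} (h : P.map X = μ) : HasLaw X μ P :=
  ⟨aemeasurable_of_map_neZero (h ▸ inferInstance), h⟩

lemma ProbabilityTheory.HasLaw.memLp_comp {𝓧 E : Type*} {m𝓧 : MeasurableSpace 𝓧}
    [NormedAddCommGroup E] {μ : Measure 𝓧} {X : Ω → 𝓧} {f : 𝓧 → E} {p : ℝ≥0∞}
    (hX : HasLaw X μ P) (hf : MemLp f p μ) : MemLp (f ∘ X) p P :=
  MemLp.comp_of_map (by rwa [hX.map_eq]) hX.aemeasurable

lemma ProbabilityTheory.HasLaw.integral_pow {μ : Measure ℝ} {Z : Ω → ℝ} (hZ : HasLaw Z μ P)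
    (k : ℕ) : ∫ ω, Z ω ^ k ∂P = ∫ x, x ^ k ∂μ :=
  hZ.integral_comp (f := fun x => x ^ k) (by fun_prop)

end Law

section GaussianMoments

lemma integrable_pow_gaussianReal (μ : ℝ) (v : ℝ≥0) (n : ℕ) :
    Integrable (fun x : ℝ => x ^ n) (gaussianReal μ v) :=
  (memLp_id_gaussianReal' n (ENNReal.natCast_ne_top n)).integrable_pow_of_le le_rfl

lemma ProbabilityTheory.HasLaw.memLp_of_gaussianReal {Ω : Type*} {mΩ : MeasurableSpace Ω}
    {P : Measure Ω} {Z : Ω → ℝ} {μ : ℝ} {v : ℝ≥0} (hZ : HasLaw Z (gaussianReal μ v) P) (n : ℕ) :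
    MemLp Z n P :=
  hZ.memLp_comp (memLp_id_gaussianReal' n (ENNReal.natCast_ne_top n))

lemma hasDerivAt_gaussianPDFReal (μ : ℝ) (v : ℝ≥0) (x : ℝ) :
    HasDerivAt (gaussianPDFReal μ v) (-((x - μ) / v) * gaussianPDFReal μ v x) x := by
  have h : HasDerivAt (fun y => -(y - μ) ^ 2 / (2 * v)) (-((x - μ) / v)) x := by
    refine ((hasDerivAt_id' x).sub_const μ).fun_pow 2 |>.neg.div_const _ |>.congr_deriv ?_
    rcases eq_or_ne (v : ℝ) 0 with hv | hv
    · simp [hv]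
    · field_simp
      ring
  rw [gaussianPDFReal_def]
  exact h.exp.const_mul (√(2 * π * v))⁻¹ |>.congr_deriv (by ring)

lemma integrable_gaussianReal_iff {E : Type*} [NormedAddCommGroup E] [NormedSpace ℝ E]
    {μ : ℝ} {v : ℝ≥0} (hv : v ≠ 0) {f : ℝ → E} :
    Integrable f (gaussianReal μ v) ↔ Integrable (fun x => gaussianPDFReal μ v x • f x) := by
  rw [gaussianReal_of_var_ne_zero _ hv, integrable_withDensity_iff_integrable_smul'
    (measurable_gaussianPDF μ v) (ae_of_all _ fun _ => gaussianPDF_lt_top)]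
  simp [gaussianPDF, ENNReal.toReal_ofReal (gaussianPDFReal_nonneg μ v _)]

/-- Stein's identity: integrate the derivative of `x ^ (n + 1) * φ x`, where `φ` is the Gaussian
density, using `φ' x = -(x / v) * φ x`. -/
lemma integral_pow_add_two_gaussianReal (v : ℝ≥0) (n : ℕ) :
    ∫ x, x ^ (n + 2) ∂gaussianReal 0 v = (n + 1) * v * ∫ x, x ^ n ∂gaussianReal 0 v := by
  rcases eq_or_ne v 0 with rfl | hv
  · simp [gaussianReal_zero_var]
  have hv' : (v : ℝ) ≠ 0 := by exact_mod_cast hv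
  have hint : ∀ k : ℕ, Integrable (fun x => gaussianPDFReal 0 v x * x ^ k) := fun k =>
    (integrable_gaussianReal_iff hv).1 (integrable_pow_gaussianReal 0 v k)
  have hderiv : ∀ x, HasDerivAt (fun y => y ^ (n + 1) * gaussianPDFReal 0 v y)
      ((n + 1) * (gaussianPDFReal 0 v x * x ^ n)
        - (v : ℝ)⁻¹ * (gaussianPDFReal 0 v x * x ^ (n + 2))) x := fun x => by
    refine (hasDerivAt_pow (n + 1) x).fun_mul (hasDerivAt_gaussianPDFReal 0 v x)
      |>.congr_deriv ?_
    simp only [Nat.add_sub_cancel, sub_zero]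
    field_simp
    push_cast
    ring
  have h := integral_eq_zero_of_hasDerivAt_of_integrable hderiv
    (((hint n).const_mul _).sub ((hint (n + 2)).const_mul _))
    ((hint (n + 1)).congr (ae_of_all _ fun x => mul_comm _ _))
  rw [integral_sub ((hint n).const_mul _) ((hint (n + 2)).const_mul _), integral_const_mul,
    integral_const_mul, sub_eq_zero] at h
  simp only [integral_gaussianReal_eq_integral_smul hv, smul_eq_mul]
  field_simp at h ⊢
  linarith

lemma integral_sq_gaussianReal (v : ℝ≥0) : ∫ x, x ^ 2 ∂gaussianReal 0 v = v := by
  simpa using integral_pow_add_two_gaussianReal v 0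

lemma integral_pow_three_gaussianReal (v : ℝ≥0) : ∫ x, x ^ 3 ∂gaussianReal 0 v = 0 := by
  simpa using integral_pow_add_two_gaussianReal v 1

lemma integral_pow_four_gaussianReal (v : ℝ≥0) :
    ∫ x, x ^ 4 ∂gaussianReal 0 v = 3 * v ^ 2 := by
  rw [integral_pow_add_two_gaussianReal v 2, integral_sq_gaussianReal]
  ring

instance isNegInvariant_gaussianReal (v : ℝ≥0) : (gaussianReal 0 v).IsNegInvariant :=
  ⟨by simpa [Measure.neg_def] using gaussianReal_map_neg (μ := 0) (v := v)⟩

end GaussianMoments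

section GaussianNoise

variable {Ω : Type*} {mΩ : MeasurableSpace Ω} {P : Measure Ω} {W Z : Ω → ℝ} {v : ℝ≥0}

lemma ProbabilityTheory.IndepFun.integral_add_gaussianReal_sq (hWZ : IndepFun W Z P)
    (hZ : HasLaw Z (gaussianReal 0 v) P) (hW : MemLp W 2 P) :
    ∫ ω, (W ω + Z ω) ^ 2 ∂P = ∫ ω, W ω ^ 2 ∂P + v := by
  have := hZ.isProbabilityMeasure
  rw [hWZ.integral_add_pow hW (hZ.memLp_of_gaussianReal 2)]
  simp only [Nat.reduceAdd, hZ.integral_pow, sum_range_succ, range_one, sum_singleton,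
    Nat.choose_zero_right, Nat.cast_one, pow_zero, integral_const, probReal_univ, smul_eq_mul,
    mul_one, tsub_zero, integral_sq_gaussianReal, one_mul, Nat.choose_succ_self_right,
    Nat.cast_ofNat, pow_one, Nat.add_one_sub_one, integral_id_gaussianReal, mul_zero, add_zero,
    Nat.choose_self, tsub_self]
  ring

lemma ProbabilityTheory.IndepFun.integral_add_gaussianReal_pow_four (hWZ : IndepFun W Z P)
    (hZ : HasLaw Z (gaussianReal 0 v) P) (hW : MemLp W 4 P) :
    ∫ ω, (W ω + Z ω) ^ 4 ∂P = ∫ ω, W ω ^ 4 ∂P + 6 * v * ∫ ω, W ω ^ 2 ∂P + 3 * v ^ 2 := by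
  have := hZ.isProbabilityMeasure
  rw [hWZ.integral_add_pow hW (hZ.memLp_of_gaussianReal 4)]
  simp only [Nat.reduceAdd, hZ.integral_pow, sum_range_succ, range_one, sum_singleton, Nat.choose,
    Nat.cast_one, pow_zero, integral_const, probReal_univ, smul_eq_mul, mul_one, tsub_zero,
    integral_pow_four_gaussianReal, one_mul, add_zero, Nat.cast_ofNat, pow_one,
    Nat.add_one_sub_one, integral_pow_three_gaussianReal, mul_zero, Nat.reduceSub,
    integral_sq_gaussianReal, integral_id_gaussianReal, tsub_self]
  ring

lemma ProbabilityTheory.IndepFun.variance_sq_add_gaussianReal (hWZ : IndepFun W Z P)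
    (hZ : HasLaw Z (gaussianReal 0 v) P) (hW : MemLp W 4 P) :
    Var[fun ω => (W ω + Z ω) ^ 2; P]
      = ∫ ω, W ω ^ 4 ∂P + 4 * v * ∫ ω, W ω ^ 2 ∂P + 2 * v ^ 2 - (∫ ω, W ω ^ 2 ∂P) ^ 2 := by
  have := hZ.isProbabilityMeasure
  have hWZ4 : MemLp (fun ω => W ω + Z ω) 4 P := hW.add (hZ.memLp_of_gaussianReal 4)
  have hsq : MemLp (fun ω => (W ω + Z ω) ^ 2) 2 P :=
    (memLp_two_iff_integrable_sq (hWZ4.1.pow 2)).2 <| by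
      simpa only [Pi.pow_apply, ← pow_mul] using hWZ4.integrable_pow_of_le le_rfl
  rw [variance_eq_sub hsq]
  simp only [Pi.pow_apply, ← pow_mul]
  rw [hWZ.integral_add_gaussianReal_pow_four hZ hW,
    hWZ.integral_add_gaussianReal_sq hZ (hW.mono_exponent (by norm_num))]
  ring

lemma ProbabilityTheory.IndepFun.integral_sub_gaussianReal_sq (hWZ : IndepFun W Z P)
    (hZ : HasLaw Z (gaussianReal 0 v) P) (hW : MemLp W 2 P) :
    ∫ ω, (W ω - Z ω) ^ 2 ∂P = ∫ ω, W ω ^ 2 ∂P + v := by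
  simpa [sub_eq_add_neg] using (hWZ.comp measurable_id measurable_neg).integral_add_gaussianReal_sq
    ((Measure.measurePreserving_neg _).comp_hasLaw hZ) hW

lemma ProbabilityTheory.IndepFun.integral_sub_gaussianReal_pow_four (hWZ : IndepFun W Z P)
    (hZ : HasLaw Z (gaussianReal 0 v) P) (hW : MemLp W 4 P) :
    ∫ ω, (W ω - Z ω) ^ 4 ∂P = ∫ ω, W ω ^ 4 ∂P + 6 * v * ∫ ω, W ω ^ 2 ∂P + 3 * v ^ 2 := by
  simpa [sub_eq_add_neg] using
    (hWZ.comp measurable_id measurable_neg).integral_add_gaussianReal_pow_four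
      ((Measure.measurePreserving_neg _).comp_hasLaw hZ) hW

end GaussianNoise

section EvenFunction

variable {v : ℝ≥0} {g : ℝ → ℝ}

lemma integral_pow_mul_neg_pow_of_even (hg_even : g.Even) (k : ℕ) {j : ℕ} (hj : Odd j) :
    ∫ x, g x ^ k * (-x) ^ j ∂gaussianReal 0 v = 0 :=
  integral_eq_zero_of_odd _ fun x => by simp [hg_even x, hj.neg_pow]

lemma integral_sub_id_sq_of_even (hg : Measurable g) (hg_even : g.Even)
    (hmom : ∀ k ≤ 2, Integrable (fun x => |x| ^ (2 - k) * |g x| ^ k) (gaussianReal 0 v)) :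
    ∫ x, (g x - x) ^ 2 ∂gaussianReal 0 v = ∫ x, g x ^ 2 ∂gaussianReal 0 v + v := by
  rw [integral_sub_id_pow hg hmom]
  simp only [sum_range_succ, sum_range_zero, zero_add, Nat.reduceSub]
  rw [integral_pow_mul_neg_pow_of_even hg_even 1 odd_one]
  simp [integral_sq_gaussianReal, add_comm]

lemma integral_sub_id_pow_four_of_even (hg : Measurable g) (hg_even : g.Even)
    (hmom : ∀ k ≤ 4, Integrable (fun x => |x| ^ (4 - k) * |g x| ^ k) (gaussianReal 0 v)) :
    ∫ x, (g x - x) ^ 4 ∂gaussianReal 0 v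
      = ∫ x, g x ^ 4 ∂gaussianReal 0 v + 6 * ∫ x, x ^ 2 * g x ^ 2 ∂gaussianReal 0 v
        + 3 * v ^ 2 := by
  rw [integral_sub_id_pow hg hmom]
  simp only [sum_range_succ, sum_range_zero, zero_add, Nat.reduceSub]
  rw [integral_pow_mul_neg_pow_of_even hg_even 1 (by decide),
    integral_pow_mul_neg_pow_of_even hg_even 3 odd_one]
  simp only [Nat.choose, Nat.cast_one, pow_zero, mul_comm, mul_one, Even.neg_pow,
    integral_pow_four_gaussianReal, one_mul, add_zero, Nat.reduceAdd, Nat.cast_ofNat, zero_mul,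
    even_two, (by decide : Even 4)]
  ring

end EvenFunction

/-- For an even measurable `g` with all the appearing moments finite, and
`X, X̃, ε` mutually independent standard Gaussians,
`Var((g(X)-X+ε)²) - Var((g(X)-X̃+ε)²) = 6 E[X²g(X)²] - 6 E[g(X)²]`. -/
theorem variance_score_difference
    {Ω : Type*} [MeasurableSpace Ω] (P : Measure Ω) [IsProbabilityMeasure P]
    (X Xt ε : Ω → ℝ) (g : ℝ → ℝ)
    (hindep : iIndepFun ![X, Xt, ε] P)
    (hX : Measure.map X P = gaussianReal 0 1)
    (hXt : Measure.map Xt P = gaussianReal 0 1)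
    (hε : Measure.map ε P = gaussianReal 0 1)
    (hg : Measurable g) (hgeven : ∀ x, g (-x) = g x)
    (hmom : ∀ a b : ℕ, a + b ≤ 4 →
      Integrable (fun x => |x| ^ a * |g x| ^ b) (gaussianReal 0 1)) :
    variance (fun ω => (g (X ω) - X ω + ε ω) ^ 2) P -
        variance (fun ω => (g (X ω) - Xt ω + ε ω) ^ 2) P
      = 6 * ∫ x, x ^ 2 * g x ^ 2 ∂(gaussianReal 0 1)
        - 6 * ∫ x, g x ^ 2 ∂(gaussianReal 0 1) := by
  have hXl : HasLaw X (gaussianReal 0 1) P := .of_map_eq hX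
  have hXtl : HasLaw Xt (gaussianReal 0 1) P := .of_map_eq hXt
  have hεl : HasLaw ε (gaussianReal 0 1) P := .of_map_eq hε
  have hgX : MemLp (fun ω => g (X ω)) 4 P := hXl.memLp_comp <| memLp_of_integrable_abs_pow
    (by norm_num) hg.aestronglyMeasurable (by simpa using hmom 0 4 le_rfl)
  have hUε : IndepFun (fun ω => g (X ω) - X ω) ε P :=
    (hindep.indepFun (i := 0) (j := 2) (by decide)).comp (hg.sub measurable_id) measurable_id
  have hVε : IndepFun (fun ω => g (X ω) - Xt ω) ε P :=
    (hindep.indepFun_prodMk₀ (fun i => by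
      fin_cases i; exacts [hXl.aemeasurable, hXtl.aemeasurable, hεl.aemeasurable])
      0 1 2 (by decide) (by decide)).comp ((hg.comp measurable_fst).sub measurable_snd)
      measurable_id
  have hgXXt : IndepFun (fun ω => g (X ω)) Xt P :=
    (hindep.indepFun (i := 0) (j := 1) (by decide)).comp hg measurable_id
  have hgX_int : ∀ k : ℕ, ∫ ω, g (X ω) ^ k ∂P = ∫ x, g x ^ k ∂gaussianReal 0 1 := fun k =>
    hXl.integral_comp (f := fun x => g x ^ k) (by fun_prop)
  have hU_int : ∀ k : ℕ, ∫ ω, (g (X ω) - X ω) ^ k ∂P = ∫ x, (g x - x) ^ k ∂gaussianReal 0 1 :=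
    fun k => hXl.integral_comp (f := fun x => (g x - x) ^ k) (by fun_prop)
  rw [hUε.variance_sq_add_gaussianReal hεl (hgX.sub (hXl.memLp_of_gaussianReal 4)),
    hVε.variance_sq_add_gaussianReal hεl (hgX.sub (hXtl.memLp_of_gaussianReal 4)),
    hU_int, hU_int, integral_sub_id_sq_of_even hg hgeven fun k _ => hmom _ _ (by omega),
    integral_sub_id_pow_four_of_even hg hgeven fun k _ => hmom _ _ (by omega),
    hgXXt.integral_sub_gaussianReal_sq hXtl (hgX.mono_exponent (by norm_num)),
    hgXXt.integral_sub_gaussianReal_pow_four hXtl hgX, hgX_int, hgX_int]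
  push_cast
  ring
end

section
/- For X ~ N(0,1) and g(x) = 1/√(θ² + x²) with 0 < θ, we have E[g(X)²] ≥ (1/θ)√(π/2) - 2/√π. -/
open MeasureTheory ProbabilityTheory Real

/-!
On `[-√2, √2]` the standard Gaussian density is at least `(1 - x²/2)/√(2π)`, and the
integrand `(θ² + x²)⁻¹` is nonnegative, so `E[(θ² + X²)⁻¹]` dominates
`(2π)^{-1/2} ∫_{-√2}^{√2} (1 - x²/2)/(θ² + x²) dx = (2π)^{-1/2} ((2 + θ²)/θ · arctan(√2/θ) - √2)`.
The bound `arctan y ≥ π/2 - 1/y` then gives `(2π)^{-1/2} (π/θ - 2√2)`, which is the claim.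
-/

namespace Real

theorem arctan_le_self {x : ℝ} (hx : 0 ≤ x) : arctan x ≤ x := by
  simpa using le_tan (arctan_nonneg.2 hx) (arctan_lt_pi_div_two x)

theorem pi_div_two_sub_inv_le_arctan {x : ℝ} (hx : 0 < x) : π / 2 - x⁻¹ ≤ arctan x := by
  linarith [arctan_inv_of_pos hx, arctan_le_self (inv_nonneg.2 hx.le)]

end Real

theorem integral_one_sub_sq_div_two_mul_inv_sq_add_sq {θ : ℝ} (hθ : θ ≠ 0) (c : ℝ) :
    ∫ x in -c..c, (1 - x ^ 2 / 2) * (θ ^ 2 + x ^ 2)⁻¹ = (2 + θ ^ 2) / θ * arctan (c / θ) - c := by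
  have hsplit (x : ℝ) :
      (1 - x ^ 2 / 2) * (θ ^ 2 + x ^ 2)⁻¹ = (1 + θ ^ 2 / 2) * (θ ^ 2 + x ^ 2)⁻¹ - 1 / 2 := by
    have : θ ^ 2 + x ^ 2 ≠ 0 := by positivity
    field_simp
    ring
  have hint :
      IntervalIntegrable (fun x : ℝ => (1 + θ ^ 2 / 2) * (θ ^ 2 + x ^ 2)⁻¹) volume (-c) c :=
    Continuous.intervalIntegrable (by fun_prop (disch := intro x; positivity)) _ _
  simp_rw [hsplit]
  rw [intervalIntegral.integral_sub hint intervalIntegrable_const,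
    intervalIntegral.integral_const_mul, integral_inv_sq_add_sq hθ,
    intervalIntegral.integral_const, neg_div, arctan_neg, smul_eq_mul]
  field_simp
  ring

theorem intervalIntegral_one_sub_sq_div_two_mul_le_integral_gaussianReal {f : ℝ → ℝ}
    (hf₀ : 0 ≤ f) (hf : Continuous f) (hfi : Integrable f (gaussianReal 0 1)) {a b : ℝ}
    (hab : a ≤ b) :
    (√(2 * π))⁻¹ * ∫ x in a..b, (1 - x ^ 2 / 2) * f x ≤ ∫ x, f x ∂gaussianReal 0 1 := by
  have hφ (x : ℝ) : gaussianPDFReal 0 1 x = (√(2 * π))⁻¹ * exp (-x ^ 2 / 2) := by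
    simp [gaussianPDFReal]
  have hφf : Integrable (fun x => gaussianPDFReal 0 1 x * f x) := by
    rw [gaussianReal_of_var_ne_zero _ one_ne_zero, integrable_withDensity_iff_integrable_smul'
      (measurable_gaussianPDF 0 1) (ae_of_all _ fun _ => gaussianPDF_lt_top)] at hfi
    simpa [gaussianPDF, ENNReal.toReal_ofReal (gaussianPDFReal_nonneg 0 1 _)] using hfi
  rw [integral_gaussianReal_eq_integral_smul one_ne_zero, ← intervalIntegral.integral_const_mul]
  calc ∫ x in a..b, (√(2 * π))⁻¹ * ((1 - x ^ 2 / 2) * f x)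
      ≤ ∫ x in a..b, gaussianPDFReal 0 1 x * f x := by
        refine intervalIntegral.integral_mono_on hab
          (Continuous.intervalIntegrable (by fun_prop) _ _) hφf.intervalIntegrable
          fun x _ => ?_
        rw [hφ, mul_assoc]
        gcongr
        · exact hf₀ x
        · linarith [add_one_le_exp (-x ^ 2 / 2)]
    _ = ∫ x in Set.Ioc a b, gaussianPDFReal 0 1 x * f x := intervalIntegral.integral_of_le hab
    _ ≤ ∫ x, gaussianPDFReal 0 1 x • f x :=
        setIntegral_le_integral hφf
          (ae_of_all _ fun x => mul_nonneg (gaussianPDFReal_nonneg _ _ x) (hf₀ x))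

theorem integrable_inv_sq_add_sq {θ : ℝ} (hθ : θ ≠ 0) (μ : Measure ℝ) [IsFiniteMeasure μ] :
    Integrable (fun x : ℝ => (θ ^ 2 + x ^ 2)⁻¹) μ := by
  refine .of_bound (by fun_prop) (θ ^ 2)⁻¹ (ae_of_all _ fun x => ?_)
  rw [Real.norm_of_nonneg (by positivity)]
  gcongr
  exact le_add_of_nonneg_right (sq_nonneg x)

theorem inv_sqrt_two_mul_pi_mul_le_integral_inv_sq_add_sq_gaussianReal {θ : ℝ} (hθ : θ ≠ 0) :
    (√(2 * π))⁻¹ * ((2 + θ ^ 2) / θ * arctan (√2 / θ) - √2) ≤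
      ∫ x, (θ ^ 2 + x ^ 2)⁻¹ ∂gaussianReal 0 1 := by
  rw [← integral_one_sub_sq_div_two_mul_inv_sq_add_sq hθ]
  exact intervalIntegral_one_sub_sq_div_two_mul_le_integral_gaussianReal
    (fun x => by positivity) (by fun_prop (disch := intro x; positivity))
    (integrable_inv_sq_add_sq hθ _) (neg_le_self (sqrt_nonneg 2))

/-- For `X ~ N(0,1)` and `g(x) = 1/√(θ² + x²)` with `θ > 0`,
`E[g(X)²] ≥ (1/θ)√(π/2) - 2/√π`. -/
theorem g_sq_moment_lower (θ : ℝ) (hθ : 0 < θ) :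
    (∫ x, (1 / Real.sqrt (θ ^ 2 + x ^ 2)) ^ 2 ∂(gaussianReal 0 1))
      ≥ (1 / θ) * Real.sqrt (Real.pi / 2) - 2 / Real.sqrt Real.pi := by
  have hsq (x : ℝ) : (1 / √(θ ^ 2 + x ^ 2)) ^ 2 = (θ ^ 2 + x ^ 2)⁻¹ := by
    rw [div_pow, one_pow, sq_sqrt (by positivity), one_div]
  have harctan := pi_div_two_sub_inv_le_arctan (x := √2 / θ) (by positivity)
  have hbracket : π / θ - 2 * √2 ≤ (2 + θ ^ 2) / θ * arctan (√2 / θ) - √2 :=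
    calc π / θ - 2 * √2 = 2 / θ * (π / 2 - (√2 / θ)⁻¹) - √2 := by
          field_simp
          linear_combination (-θ) * sq_sqrt zero_le_two
      _ ≤ 2 / θ * arctan (√2 / θ) - √2 := by gcongr
      _ ≤ (2 + θ ^ 2) / θ * arctan (√2 / θ) - √2 := by
          gcongr
          exact le_add_of_nonneg_right (sq_nonneg θ)
  simp_rw [hsq, ge_iff_le]
  calc (1 / θ) * √(π / 2) - 2 / √π = (√(2 * π))⁻¹ * (π / θ - 2 * √2) := by
        rw [sqrt_div pi_pos.le, sqrt_mul zero_le_two]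
        field_simp
        rw [sq_sqrt pi_pos.le]
    _ ≤ _ := by gcongr
    _ ≤ _ := inv_sqrt_two_mul_pi_mul_le_integral_inv_sq_add_sq_gaussianReal hθ.ne'
end
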